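/- The set-valued map x ↦ 𝐔(x) is non-increasing on (1, ∞) with respect to set inclusion: for all reals x, y with 1 < y < x one has 𝐔(x) ⊆ 𝐔(y). -/

import Mathlib

open scoped ENNReal NNReal Classical

namespace Expansions

/-- Digit sequences over the alphabet `{0,1,…,M}`; index `i : ℕ` represents the
`(i+1)`-st digit `d_{i+1}` of the paper. -/
abbrev Digits (M : ℕ) := ℕ → Fin (M + 1)

/-- `π_q((d_i)) = Σ_{i≥1} d_i / q^i`. -/
noncomputable def piQ (M : ℕ) (q : ℝ) (d : Digits M) : ℝ :=
  ∑' i : ℕ, (d i : ℝ) / q ^ (i + 1)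

/-- `𝒰_q` : the set of real numbers having a unique `q`-expansion. -/
def Uq (M : ℕ) (q : ℝ) : Set ℝ := {x | ∃! d : Digits M, piQ M q d = x}

/-- `𝐔_q` : the set of sequences that are the unique `q`-expansion of their value. -/
def UqSym (M : ℕ) (q : ℝ) : Set (Digits M) :=
  {d | ∀ e : Digits M, piQ M q e = piQ M q d → e = d}

/-- `𝒰(x)` : the set of univoque bases of `x`. -/
def Ubases (M : ℕ) (x : ℝ) : Set ℝ :=
  {q | q ∈ Set.Ioc (1 : ℝ) ((M : ℝ) + 1) ∧ x ∈ Uq M q}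

/-- `q_x = min{M+1, 1+M/x}`. -/
noncomputable def qx (M : ℕ) (x : ℝ) : ℝ := min ((M : ℝ) + 1) (1 + (M : ℝ) / x)

/-- Strict lexicographic order on digit sequences. -/
def lexLt {M : ℕ} (c d : Digits M) : Prop := ∃ n, (∀ i < n, c i = d i) ∧ c n < d n

def lexLe {M : ℕ} (c d : Digits M) : Prop := c = d ∨ lexLt c d

/-- The sequence ends with `0^∞`. -/
def EndsInZero {M : ℕ} (d : Digits M) : Prop := ∃ N, ∀ n ≥ N, d n = 0

/-- `d` is the quasi-greedy `q`-expansion of `x`: the lexicographically largest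
`q`-expansion of `x` not ending with `0^∞`. -/
def IsQuasiGreedy (M : ℕ) (q x : ℝ) (d : Digits M) : Prop :=
  piQ M q d = x ∧ ¬ EndsInZero d ∧
    ∀ e : Digits M, piQ M q e = x → ¬ EndsInZero e → lexLe e d

/-- `Φ_x(q)`: the quasi-greedy `q`-expansion of `x` (junk value if none exists). -/
noncomputable def Phi (M : ℕ) (x q : ℝ) : Digits M :=
  if h : ∃ d : Digits M, IsQuasiGreedy M q x d then h.choose else fun _ => 0

/-- `𝐔(x) = {Φ_x(q) : q ∈ 𝒰(x)}`. -/
def UxSym (M : ℕ) (x : ℝ) : Set (Digits M) := (Phi M x) '' (Ubases M x)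

/-- `ρ((c_i),(d_i)) = (M+1)^{-inf{i ≥ 1 : c_i ≠ d_i}}` (our index `n` represents the
`(n+1)`-st digit, whence the exponent `-(n+1)`); `ρ(c,c) = 0`. -/
noncomputable def rho (M : ℕ) (c d : Digits M) : ℝ :=
  if c = d then 0
  else ((M : ℝ) + 1) ^ (-(((sInf {i | c i ≠ d i} : ℕ) : ℤ) + 1))

/-- Diameter of a set with respect to a distance function, valued in `ℝ≥0∞`. -/
noncomputable def gdiam {X : Type*} (dist : X → X → ℝ) (A : Set X) : ℝ≥0∞ :=
  ⨆ x ∈ A, ⨆ y ∈ A, ENNReal.ofReal (dist x y)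

/-- The `s`-dimensional Hausdorff outer measure with respect to a distance function:
`lim_{δ→0⁺} inf {Σ diam(C n)^s : A ⊆ ⋃ C n, diam (C n) ≤ δ}`. -/
noncomputable def gHMeasure {X : Type*} (dist : X → X → ℝ) (s : ℝ) (A : Set X) : ℝ≥0∞ :=
  ⨆ (δ : ℝ) (_ : 0 < δ),
    ⨅ (C : ℕ → Set X) (_ : A ⊆ ⋃ n, C n)
      (_ : ∀ n, gdiam dist (C n) ≤ ENNReal.ofReal δ),
      ∑' n, gdiam dist (C n) ^ s

/-- Hausdorff dimension with respect to a distance function. -/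
noncomputable def gdimH {X : Type*} (dist : X → X → ℝ) (A : Set X) : ℝ≥0∞ :=
  ⨆ (s : ℝ≥0) (_ : gHMeasure dist (s : ℝ) A = ⊤), (s : ℝ≥0∞)

/-- The generalized golden ratio `q_G`. -/
noncomputable def qG (M : ℕ) : ℝ :=
  if M % 2 = 0 then ((M / 2 : ℕ) : ℝ) + 1
  else (((M / 2 : ℕ) : ℝ) + 1 +
    Real.sqrt (((M / 2 : ℕ) : ℝ) ^ 2 + 6 * ((M / 2 : ℕ) : ℝ) + 5)) / 2

/-- `x_G = M/(q_G - 1)`. -/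
noncomputable def xG (M : ℕ) : ℝ := (M : ℝ) / (qG M - 1)

/-- The Komornik–Loreti constant `q_KL = min 𝒰(1)`. -/
noncomputable def qKL (M : ℕ) : ℝ := sInf (Ubases M 1)

/-- `x_KL = M/(q_KL - 1)`. -/
noncomputable def xKL (M : ℕ) : ℝ := (M : ℝ) / (qKL M - 1)

/-- `X_iso`: the set of `x > 0` such that `𝒰(x)` contains an isolated point. -/
def Xiso (M : ℕ) : Set ℝ :=
  {x | 0 < x ∧ ∃ q ∈ Ubases M x, ∃ ε > 0, Ubases M x ∩ Set.Ioo (q - ε) (q + ε) = {q}}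

/-- The bifurcation set `𝒱 = {q ∈ (1,M+1] : 𝐔_r ≠ 𝐔_q for all r > q}`. -/
def Vset (M : ℕ) : Set ℝ :=
  {q | q ∈ Set.Ioc (1 : ℝ) ((M : ℝ) + 1) ∧
    ∀ r ∈ Set.Ioc (1 : ℝ) ((M : ℝ) + 1), q < r → UqSym M r ≠ UqSym M q}

/-- The Thue–Morse sequence `τ_i` = parity of the binary digit sum of `i`. -/
def tm (i : ℕ) : ℕ := (Nat.digits 2 i).sum % 2

/-!
If `x` has a unique `q`-expansion `d`, then `d` satisfies Parry-type tail conditions (raising or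
lowering a digit can never be compensated by the tail; the proof uses that every value in
`[0, M/(q-1)]` has a greedy expansion). These conditions only become easier for larger bases, so
`d` stays the unique `p`-expansion of its value for every `p ≥ q`; it also cannot end in `0^∞`,
so it is the quasi-greedy expansion. As `p ↦ π_p(d)` is continuous, equals `x` at `q` and is
at most `1` at `M + 1`, some `p ∈ [q, M + 1]` gives `π_p(d) = y`, whence `d ∈ 𝐔(y)`.
-/

section Univoque

variable {M : ℕ} {q p : ℝ}

/- `Stream'.cons` and `Stream'.drop` would do, but `Digits M` is not syntactically a `Stream'`,
which defeats `rw`. -/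
namespace Digits

def cons (b : Fin (M + 1)) (d : Digits M) : Digits M
  | 0 => b
  | i + 1 => d i

def drop (n : ℕ) (d : Digits M) : Digits M := fun i => d (n + i)

lemma drop_one_cons (b : Fin (M + 1)) (d : Digits M) : (cons b d).drop 1 = d :=
  funext fun i => congrArg (cons b d) (add_comm 1 i)

@[simp] lemma cons_zero (b : Fin (M + 1)) (d : Digits M) : cons b d 0 = b := rfl

lemma cons_drop_one (d : Digits M) : cons (d 0) (d.drop 1) = d := by
  funext i
  cases i
  · rfl
  · exact congrArg d (add_comm 1 _)

@[simp] lemma drop_zero (d : Digits M) : d.drop 0 = d :=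
  funext fun i => congrArg d (zero_add i)

lemma drop_drop (d : Digits M) (m n : ℕ) : (d.drop m).drop n = d.drop (m + n) :=
  funext fun i => congrArg d (add_assoc m n i).symm

end Digits

lemma hasSum_div_pow_succ (hq : 1 < q) (c : ℝ) :
    HasSum (fun i : ℕ => c / q ^ (i + 1)) (c / (q - 1)) := by
  have hq0 : q ≠ 0 := by positivity
  have hq1 : q - 1 ≠ 0 := by linarith
  have h := (hasSum_geometric_of_lt_one (by positivity) (inv_lt_one_of_one_lt₀ hq)).mul_left (c / q)
  rw [show c / (q - 1) = c / q * (1 - q⁻¹)⁻¹ by field_simp]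
  exact h.congr_fun fun i => by rw [pow_succ, inv_pow]; field_simp

lemma digit_le (b : Fin (M + 1)) : ((b : ℕ) : ℝ) ≤ M := by exact_mod_cast Fin.is_le b

lemma cast_val_rev (b : Fin (M + 1)) : ((b.rev : ℕ) : ℝ) = M - (b : ℕ) := by
  rw [Fin.val_rev, Nat.cast_sub (by omega)]
  push_cast
  ring

lemma summable_piQ (hq : 1 < q) (d : Digits M) :
    Summable fun i => ((d i : ℕ) : ℝ) / q ^ (i + 1) :=
  (hasSum_div_pow_succ hq M).summable.of_nonneg_of_le (fun _ => by positivity)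
    fun _ => div_le_div_of_nonneg_right (digit_le _) (by positivity)

lemma piQ_nonneg (hq : 0 ≤ q) (d : Digits M) : 0 ≤ piQ M q d :=
  tsum_nonneg fun _ => by positivity

lemma piQ_zero : piQ M q (fun _ => 0) = 0 := by
  simp [piQ]

lemma piQ_le (hq : 1 < q) (d : Digits M) : piQ M q d ≤ M / (q - 1) :=
  hasSum_le (fun _ => div_le_div_of_nonneg_right (digit_le _) (by positivity))
    (summable_piQ hq d).hasSum (hasSum_div_pow_succ hq M)

lemma piQ_rev (hq : 1 < q) (d : Digits M) :
    piQ M q (Fin.rev ∘ d) = M / (q - 1) - piQ M q d := by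
  refine (((hasSum_div_pow_succ hq M).sub (summable_piQ hq d).hasSum).congr_fun
    fun i => ?_).tsum_eq
  simp only [Function.comp_apply, cast_val_rev]
  ring

lemma piQ_cons (hq : 1 < q) (b : Fin (M + 1)) (d : Digits M) :
    piQ M q (d.cons b) = ((b : ℕ) + piQ M q d) / q := by
  rw [piQ, (summable_piQ hq _).tsum_eq_zero_add, add_div, piQ, ← tsum_div_const]
  congr 1
  · simp
  · congr 1 with i
    rw [pow_succ _ (i + 1), div_div]
    rfl

lemma piQ_eq_head_tail (hq : 1 < q) (d : Digits M) :
    piQ M q d = ((d 0 : ℕ) + piQ M q (d.drop 1)) / q := by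
  conv_lhs => rw [← d.cons_drop_one]
  exact piQ_cons hq _ _

lemma piQ_antitone (hq : 1 < q) (hqp : q ≤ p) (d : Digits M) : piQ M p d ≤ piQ M q d :=
  Summable.tsum_le_tsum (fun i => div_le_div_of_nonneg_left (by positivity) (by positivity)
    (pow_le_pow_left₀ (by positivity) hqp _)) (summable_piQ (hq.trans_le hqp) d)
    (summable_piQ hq d)

lemma continuousOn_piQ (hq : 1 < q) (d : Digits M) :
    ContinuousOn (fun p => piQ M p d) (Set.Ici q) := by
  have hpos : ∀ p ∈ Set.Ici q, 0 < p := fun p hp => by linarith [Set.mem_Ici.mp hp]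
  refine continuousOn_tsum (fun i => ?_) (summable_piQ hq d) fun i p hp => ?_
  · exact continuousOn_const.div (continuousOn_id.pow _) fun p hp => (pow_pos (hpos p hp) _).ne'
  · rw [Real.norm_of_nonneg (div_nonneg (by positivity) (pow_pos (hpos p hp) _).le)]
    exact div_le_div_of_nonneg_left (by positivity) (by positivity)
      (pow_le_pow_left₀ (by positivity) hp _)

lemma one_le_div_sub_one (hq1 : 1 < q) (hqM : q ≤ M + 1) : 1 ≤ (M : ℝ) / (q - 1) :=
  (one_le_div (by linarith)).2 (by linarith)

lemma exists_piQ_eq_of_isBounded {S : Set ℝ} (hq : 1 < q) (hS : Bornology.IsBounded S)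
    (hstep : ∀ v ∈ S, ∃ b : Fin (M + 1), q * v - b ∈ S) {v : ℝ} (hv : v ∈ S) :
    ∃ d : Digits M, piQ M q d = v := by
  choose! b hb using hstep
  set r : ℕ → ℝ := fun k => (fun w => q * w - b w)^[k] v
  have hr_succ : ∀ k, r (k + 1) = q * r k - b (r k) := fun k =>
    Function.iterate_succ_apply' _ k v
  have hr : ∀ k, r k ∈ S := fun k => by
    induction k with
    | zero => exact hv
    | succ k ih => rw [hr_succ]; exact hb _ ih
  set d : Digits M := fun k => b (r k)
  refine ⟨d, ?_⟩
  have herr : ∀ k, piQ M q d - v = (piQ M q (d.drop k) - r k) / q ^ k := fun k => by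
    induction k with
    | zero => simp [r]
    | succ k ih =>
      have hdk : d.drop k 0 = b (r k) := rfl
      rw [ih, piQ_eq_head_tail hq (d.drop k), hdk, Digits.drop_drop, hr_succ]
      field_simp
      ring
  obtain ⟨C, hC⟩ := isBounded_iff_forall_norm_le.1 hS
  have hqk : ∀ k, 0 < q ^ k := fun k => pow_pos (by linarith) k
  have hbound : ∀ k, |piQ M q d - v| ≤ (M / (q - 1) + C) / q ^ k := fun k => by
    rw [herr, abs_div, abs_of_pos (hqk k)]
    refine div_le_div_of_nonneg_right ?_ (hqk k).le
    refine (abs_sub _ _).trans (add_le_add ?_ (hC _ (hr k)))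
    rw [abs_of_nonneg (piQ_nonneg (by positivity) _)]
    exact piQ_le hq _
  have hlim : Filter.Tendsto (fun k : ℕ => (M / (q - 1) + C) / q ^ k) Filter.atTop (nhds 0) :=
    tendsto_const_nhds.div_atTop (tendsto_pow_atTop_atTop_of_one_lt hq)
  exact sub_eq_zero.1 (abs_nonpos_iff.1 (ge_of_tendsto' hlim hbound))

lemma exists_digit_sub_mem_Icc (hq1 : 1 < q) (hqM : q ≤ M + 1) {v : ℝ}
    (hv : v ∈ Set.Icc 0 ((M : ℝ) / (q - 1))) :
    ∃ b : Fin (M + 1), q * v - b ∈ Set.Icc 0 ((M : ℝ) / (q - 1)) := by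
  have hq1' : q - 1 ≠ 0 := by linarith
  have hqv : q * v ≤ M + M / (q - 1) :=
    calc q * v ≤ q * (M / (q - 1)) := mul_le_mul_of_nonneg_left hv.2 (by linarith)
      _ = M + M / (q - 1) := by field_simp; ring
  have hfloor := Nat.floor_le (mul_nonneg (by linarith : 0 ≤ q) hv.1)
  rcases le_or_gt M ⌊q * v⌋₊ with h | h
  · have : (M : ℝ) ≤ ⌊q * v⌋₊ := by exact_mod_cast h
    exact ⟨Fin.last M, by simp only [Fin.val_last]; constructor <;> linarith⟩
  · have := Nat.lt_floor_add_one (q * v)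
    exact ⟨⟨⌊q * v⌋₊, by omega⟩, by constructor <;> linarith [one_le_div_sub_one hq1 hqM]⟩

lemma exists_piQ_eq (hq1 : 1 < q) (hqM : q ≤ M + 1) {v : ℝ}
    (hv : v ∈ Set.Icc 0 ((M : ℝ) / (q - 1))) : ∃ d : Digits M, piQ M q d = v :=
  exists_piQ_eq_of_isBounded hq1 (Metric.isBounded_Icc _ _)
    (fun _ => exists_digit_sub_mem_Icc hq1 hqM) hv

lemma drop_one_mem_UqSym (hq : 1 < q) {d : Digits M} (hd : d ∈ UqSym M q) :
    d.drop 1 ∈ UqSym M q := fun c hc => by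
  have := hd (c.cons (d 0)) (by rw [piQ_cons hq, hc, ← piQ_eq_head_tail hq])
  rw [← this, Digits.drop_one_cons]

lemma drop_mem_UqSym (hq : 1 < q) {d : Digits M} (hd : d ∈ UqSym M q) (n : ℕ) :
    d.drop n ∈ UqSym M q := by
  induction n with
  | zero => simpa using hd
  | succ n ih => simpa [Digits.drop_drop] using drop_one_mem_UqSym hq ih

lemma rev_mem_UqSym (hq : 1 < q) {d : Digits M} (hd : d ∈ UqSym M q) :
    Fin.rev ∘ d ∈ UqSym M q := fun e he => by
  have := hd (Fin.rev ∘ e) (by rw [piQ_rev hq, he, piQ_rev hq, sub_sub_cancel])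
  rw [← this]
  funext i
  simp

lemma piQ_drop_one_lt_one (hq1 : 1 < q) (hqM : q ≤ M + 1) {d : Digits M}
    (hd : d ∈ UqSym M q) (h0 : (d 0 : ℕ) < M) : piQ M q (d.drop 1) < 1 := by
  by_contra! ht
  obtain ⟨a, ha⟩ := exists_piQ_eq hq1 hqM (v := piQ M q (d.drop 1) - 1)
    ⟨by linarith, by linarith [piQ_le hq1 (d.drop 1)]⟩
  have := hd (a.cons ⟨d 0 + 1, by omega⟩) (by
    rw [piQ_cons hq1, ha, piQ_eq_head_tail hq1 d]
    push_cast
    ring)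
  have := congrArg (fun c : Digits M => (c 0 : ℕ)) this
  simp at this

/-- Raising a digit `d n < M` by one cannot be compensated by lowering the tail after it. For
`1 < q ≤ M + 1`, `d` is the unique `q`-expansion of its value iff both `d` and `Fin.rev ∘ d`
satisfy this. -/
def TailsSmall (M : ℕ) (q : ℝ) (d : Digits M) : Prop :=
  ∀ n, (d n : ℕ) < M → piQ M q (d.drop (n + 1)) < 1

lemma tailsSmall_of_mem_UqSym (hq1 : 1 < q) (hqM : q ≤ M + 1) {d : Digits M}
    (hd : d ∈ UqSym M q) : TailsSmall M q d := fun n hn => by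
  simpa [Digits.drop_drop] using piQ_drop_one_lt_one hq1 hqM (drop_mem_UqSym hq1 hd n) hn

lemma TailsSmall.mono (hq : 1 < q) (hqp : q ≤ p) {d : Digits M} (h : TailsSmall M q d) :
    TailsSmall M p d :=
  fun n hn => (piQ_antitone hq hqp _).trans_lt (h n hn)

lemma TailsSmall.drop {d : Digits M} (h : TailsSmall M q d) (n : ℕ) :
    TailsSmall M q (d.drop n) := fun m hm => by
  simpa [Digits.drop_drop, add_assoc] using h (n + m) hm

lemma TailsSmall.head_le (hq : 1 < q) {d e : Digits M} (h : TailsSmall M q d)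
    (he : piQ M q e = piQ M q d) : e 0 ≤ d 0 := by
  by_contra! hlt
  have hd0 : (d 0 : ℕ) < M := lt_of_lt_of_le hlt (Fin.is_le _)
  have hlt' : ((d 0 : ℕ) : ℝ) + 1 ≤ (e 0 : ℕ) := by exact_mod_cast hlt
  rw [piQ_eq_head_tail hq e, piQ_eq_head_tail hq d, div_left_inj' (by positivity)] at he
  linarith [h 0 hd0, piQ_nonneg (by positivity) (e.drop 1)]

lemma head_eq_of_tailsSmall (hq : 1 < q) {d e : Digits M} (h : TailsSmall M q d)
    (hrev : TailsSmall M q (Fin.rev ∘ d)) (he : piQ M q e = piQ M q d) : e 0 = d 0 :=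
  le_antisymm (h.head_le hq he) <| Fin.rev_le_rev.1 <|
    hrev.head_le hq (e := Fin.rev ∘ e) (by rw [piQ_rev hq, piQ_rev hq, he])

lemma mem_UqSym_of_tailsSmall (hq : 1 < q) {d : Digits M} (h : TailsSmall M q d)
    (hrev : TailsSmall M q (Fin.rev ∘ d)) : d ∈ UqSym M q := fun e he => by
  have hval : ∀ n, piQ M q (e.drop n) = piQ M q (d.drop n) := fun n => by
    induction n with
    | zero => simpa using he
    | succ n ih =>
      have hhead := head_eq_of_tailsSmall hq (h.drop n) (hrev.drop n) ih
      rw [piQ_eq_head_tail hq (e.drop n), piQ_eq_head_tail hq (d.drop n), hhead,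
        div_left_inj' (by positivity), add_right_inj, Digits.drop_drop, Digits.drop_drop] at ih
      exact ih
  funext n
  exact head_eq_of_tailsSmall hq (h.drop n) (hrev.drop n) (hval n)

lemma mem_UqSym_of_le (hq1 : 1 < q) (hqM : q ≤ M + 1) (hqp : q ≤ p) {d : Digits M}
    (hd : d ∈ UqSym M q) : d ∈ UqSym M p :=
  mem_UqSym_of_tailsSmall (hq1.trans_le hqp) ((tailsSmall_of_mem_UqSym hq1 hqM hd).mono hq1 hqp)
    ((tailsSmall_of_mem_UqSym hq1 hqM (rev_mem_UqSym hq1 hd)).mono hq1 hqp)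

lemma not_endsInZero_of_exists_gt {d : Digits M} (h0 : ∃ n, d n ≠ 0)
    (hnext : ∀ n, d n ≠ 0 → ∃ m > n, d m ≠ 0) : ¬ EndsInZero d := by
  have hfreq : ∀ k, ∃ n ≥ k, d n ≠ 0 := fun k => by
    induction k with
    | zero => simpa using h0
    | succ k ih =>
      obtain ⟨n, hkn, hn⟩ := ih
      obtain ⟨m, hnm, hm⟩ := hnext n hn
      exact ⟨m, by omega, hm⟩
  rintro ⟨N, hN⟩
  obtain ⟨n, hn, hne⟩ := hfreq N
  exact hne (hN n hn)

lemma TailsSmall.not_endsInZero (hq1 : 1 < q) (hqM : q ≤ M + 1) {d : Digits M}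
    (hrev : TailsSmall M q (Fin.rev ∘ d)) (hd : 0 < piQ M q d) : ¬ EndsInZero d := by
  refine not_endsInZero_of_exists_gt ?_ fun n hn => ?_
  · by_contra! h0
    rw [show d = fun _ => 0 from funext h0, piQ_zero] at hd
    exact hd.false
  · by_contra! hzero
    have hlt := hrev n (by
      have := Fin.pos_iff_ne_zero.2 hn
      rw [Function.comp_apply, Fin.val_rev]
      omega)
    have htail : d.drop (n + 1) = fun _ => 0 := funext fun i => hzero _ (by omega)
    rw [show Digits.drop (n + 1) (Fin.rev ∘ d) = Fin.rev ∘ d.drop (n + 1) from rfl, piQ_rev hq1,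
      htail, piQ_zero, sub_zero] at hlt
    linarith [one_le_div_sub_one hq1 hqM]

lemma not_endsInZero_of_mem_UqSym (hq1 : 1 < q) (hqM : q ≤ M + 1) {d : Digits M}
    (hd : d ∈ UqSym M q) (hpos : 0 < piQ M q d) : ¬ EndsInZero d :=
  (tailsSmall_of_mem_UqSym hq1 hqM (rev_mem_UqSym hq1 hd)).not_endsInZero hq1 hqM hpos

lemma exists_mem_Icc_piQ_eq (hq1 : 1 < q) (hqM : q ≤ M + 1) (d : Digits M) {y : ℝ}
    (hy : 1 ≤ y) (hyd : y ≤ piQ M q d) : ∃ p ∈ Set.Icc q ((M : ℝ) + 1), piQ M p d = y := by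
  have hend : piQ M (M + 1) d ≤ 1 := by
    have := piQ_le (q := M + 1) (by linarith) d
    rw [add_sub_cancel_right] at this
    exact this.trans (div_self_le_one _)
  exact intermediate_value_Icc' hqM ((continuousOn_piQ hq1 d).mono Set.Icc_subset_Ici_self)
    ⟨hend.trans hy, hyd⟩

lemma Phi_piQ {d : Digits M} (hd : d ∈ UqSym M q) (hz : ¬ EndsInZero d) :
    Phi M (piQ M q d) q = d := by
  have hex : ∃ e, IsQuasiGreedy M q (piQ M q d) e :=
    ⟨d, rfl, hz, fun e he _ => Or.inl (hd e he)⟩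
  rw [Phi, dif_pos hex]
  exact hd _ hex.choose_spec.1

lemma mem_UxSym_piQ (hq : q ∈ Set.Ioc 1 ((M : ℝ) + 1)) {d : Digits M} (hd : d ∈ UqSym M q)
    (hz : ¬ EndsInZero d) : d ∈ UxSym M (piQ M q d) :=
  ⟨q, ⟨hq, d, rfl, fun e he => hd e he⟩, Phi_piQ hd hz⟩

end Univoque

theorem UxSym_antitone_general (M : ℕ) (x y : ℝ) (hy : 1 < y) (hyx : y < x) :
    UxSym M x ⊆ UxSym M y := by
  rintro _ ⟨q, ⟨⟨hq1, hqM⟩, d, rfl, hdq⟩, rfl⟩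
  have hz : ¬ EndsInZero d := not_endsInZero_of_mem_UqSym hq1 hqM hdq (by linarith)
  obtain ⟨p, ⟨hqp, hpM⟩, rfl⟩ := exists_mem_Icc_piQ_eq hq1 hqM d hy.le hyx.le
  rw [Phi_piQ hdq hz]
  exact mem_UxSym_piQ ⟨hq1.trans_le hqp, hpM⟩ (mem_UqSym_of_le hq1 hqM hqp hdq) hz

/-- The set-valued map `x ↦ 𝐔(x)` is non-increasing on `(1,∞)`: if `1 < y < x`
then `𝐔(x) ⊆ 𝐔(y)`. -/
theorem UxSym_antitone (M : ℕ) (hM : 0 < M) (x y : ℝ) (hy : 1 < y) (hyx : y < x) :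
    UxSym M x ⊆ UxSym M y :=
  UxSym_antitone_general M x y hy hyx

end Expansions
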